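/- Let Q be a Σ⁰₂ prefix-free set of binary strings. Then there exists a monotone oracle Turing machine M such that M(X) is total for all infinite binary sequences X, and for every Martin-Löf random X, the following are equivalent: (a) M(X) is computable; (b) M(X) = η·0^ω for some finite string η; (c) X has a prefix in Q. -/

import Mathlib

open MeasureTheory Filter

/-- Cantor space: infinite binary sequences. -/
abbrev CSeq := ℕ → Bool
/-- Finite binary strings. -/
abbrev BStr := List Bool

/-- The prefix of `X` of length `n`. -/
def pref (X : CSeq) (n : ℕ) : BStr := (List.range n).map X

/-- The halting problem `∅'`. -/
def K0 : Set ℕ := {n | ((Denumerable.ofNat Nat.Partrec.Code n).eval n).Dom}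

/-- The characteristic sequence of the halting problem. -/
noncomputable def chiK : CSeq := fun n => @decide (n ∈ K0) (Classical.propDecidable _)

/-- `f` is Turing computable with oracle `Y`: some computable functional,
reading finite initial segments of `Y`, computes `f` (consistently). -/
def ComputableInOracle {α : Type} [Primcodable α] (Y : CSeq) (f : ℕ → α) : Prop :=
  ∃ F : ℕ → BStr → Option α, Computable₂ F ∧
    ∀ n, (∃ k, (F n (pref Y k)).isSome) ∧ ∀ k a, F n (pref Y k) = some a → a = f n

/-- A set of strings is c.e. in (computably enumerable relative to) the oracle `Y`. -/
def CEIn (Y : CSeq) (S : Set BStr) : Prop :=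
  ∃ R : BStr → BStr → Bool, Computable₂ R ∧ ∀ σ, σ ∈ S ↔ ∃ k, R σ (pref Y k) = true

/-- A set of strings is Σ⁰₂ iff it is c.e. relative to the halting problem. -/
def SigmaTwo (S : Set BStr) : Prop := CEIn chiK S

/-- A set of strings is prefix-free if no element is a proper prefix of another. -/
def PrefixFree (S : Set BStr) : Prop := ∀ σ ∈ S, ∀ τ ∈ S, σ <+: τ → σ = τ

/-- Two strings are compatible if one is a prefix of the other. -/
def Compat (σ τ : BStr) : Prop := σ <+: τ ∨ τ <+: σ

/-- `⟦S⟧`: the set of sequences with a prefix in `S`. -/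
def cyl (S : Set BStr) : Set CSeq := {X | ∃ σ ∈ S, pref X σ.length = σ}

/-- The binary digits of (the fractional part of) a real number. -/
noncomputable def realDigits (x : ℝ) : CSeq := fun i =>
  @decide ((1:ℝ)/2 ≤ Int.fract (x * 2 ^ i)) (Classical.propDecidable _)

/-- The fair-coin (Lebesgue) measure on Cantor space, obtained as the pushforward
of Lebesgue measure on `[0,1)` under the binary expansion map. -/
noncomputable def μC : Measure CSeq :=
  Measure.map realDigits (volume.restrict (Set.Ico (0:ℝ) 1))

/-- A uniformly-c.e.-in-`Y` family of sets of strings. -/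
def UniformCEIn (Y : CSeq) (V : ℕ → Set BStr) : Prop :=
  ∃ R : ℕ → BStr → BStr → Bool, Computable (fun p : ℕ × BStr × BStr => R p.1 p.2.1 p.2.2) ∧
    ∀ i σ, σ ∈ V i ↔ ∃ k, R i σ (pref Y k) = true

/-- A Martin-Löf test relative to the oracle `Y`. -/
def MLTestIn (Y : CSeq) (V : ℕ → Set BStr) : Prop :=
  UniformCEIn Y V ∧ ∀ i, μC (cyl (V i)) ≤ (1/2 : ENNReal) ^ i

/-- `X` is Martin-Löf random relative to the oracle `Y`. -/
def MLRandomIn (Y X : CSeq) : Prop := ∀ V, MLTestIn Y V → ∃ i, X ∉ cyl (V i)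

/-- Plain Martin-Löf randomness (trivial oracle). -/
def MLRandom (X : CSeq) : Prop := MLRandomIn (fun _ => false) X

/-- 2-randomness: Martin-Löf randomness relative to the halting problem. -/
def TwoRandom (X : CSeq) : Prop := MLRandomIn chiK X

/-- A real is 2-random if its binary expansion is 2-random. -/
def TwoRandomReal (x : ℝ) : Prop := TwoRandom (realDigits x)

/-- A real is `0'`-left-c.e. if it is the limit of an increasing sequence of
rationals computable from the halting problem. -/
def ZJLeftCE (x : ℝ) : Prop :=
  ∃ q : ℕ → ℚ, ComputableInOracle chiK q ∧ Monotone q ∧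
    Tendsto (fun n => (q n : ℝ)) atTop (nhds x)

/-- A real is `0'`-right-c.e. if it is the limit of a decreasing sequence of
rationals computable from the halting problem. -/
def ZJRightCE (x : ℝ) : Prop :=
  ∃ q : ℕ → ℚ, ComputableInOracle chiK q ∧ Antitone q ∧
    Tendsto (fun n => (q n : ℝ)) atTop (nhds x)

/-- A monotone oracle Turing machine. -/
structure MonotoneMachine where
  eval : BStr → Option BStr
  comp : Computable eval
  mono : ∀ σ τ a b, σ <+: τ → eval σ = some a → eval τ = some b → a <+: b

/-- The output of `M` on oracle `X` is total (infinite). -/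
def TotalOn (M : MonotoneMachine) (X : CSeq) : Prop :=
  ∀ n, ∃ k a, M.eval (pref X k) = some a ∧ n < a.length

/-- The output sequence of `M` on oracle `X` (meaningful where defined). -/
noncomputable def evalSeq (M : MonotoneMachine) (X : CSeq) : CSeq := fun n =>
  @dite _ (∃ k a, M.eval (pref X k) = some a ∧ n < a.length) (Classical.propDecidable _)
    (fun h => h.choose_spec.choose.getD n false) (fun _ => false)

/-- Turing reducibility `A ≤_T Y` between binary sequences. -/
def TuringLE (A Y : CSeq) : Prop := ComputableInOracle Y A

namespace S9

open Nat.Partrec (Code)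
open Nat.Partrec.Code
open Encodable (encode)

/-! ### Generic list helpers -/

theorem find?_congr {f g : ℕ → Bool} : ∀ (l : List ℕ), (∀ x ∈ l, f x = g x) →
    l.find? f = l.find? g
  | [], _ => rfl
  | a :: l, h => by
    rw [List.find?_cons, List.find?_cons, h a List.mem_cons_self]
    cases g a with
    | true => rfl
    | false => exact find?_congr l fun x hx => h x (List.mem_cons_of_mem _ hx)

theorem flatMap_congr {f g : ℕ → BStr} : ∀ (l : List ℕ), (∀ x ∈ l, f x = g x) →
    l.flatMap f = l.flatMap g
  | [], _ => rfl
  | a :: l, h => by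
    simp only [List.flatMap_cons]
    rw [h a List.mem_cons_self, flatMap_congr l fun x hx => h x (List.mem_cons_of_mem _ hx)]

theorem length_flatMap_two {f : ℕ → BStr} : ∀ (l : List ℕ), (∀ x ∈ l, (f x).length = 2) →
    (l.flatMap f).length = 2 * l.length
  | [], _ => rfl
  | a :: l, h => by
    simp only [List.flatMap_cons, List.length_append, List.length_cons,
      h a List.mem_cons_self, length_flatMap_two l fun x hx => h x (List.mem_cons_of_mem _ hx)]
    ring

theorem find?_range_eq_some {f : ℕ → Bool} {n v : ℕ} (hv : v < n) (hf : f v = true)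
    (hmin : ∀ u < v, f u = false) : (List.range n).find? f = some v := by
  have hsplit : List.range n = (List.range v ++ [v]) ++ (List.range (n - (v + 1))).map (v + 1 + ·) := by
    rw [← List.range_succ, ← List.range_add]
    congr 1
    omega
  rw [hsplit, List.find?_append, List.find?_append]
  rw [List.find?_eq_none.mpr fun x hx => by
    simp only [List.mem_range] at hx
    simp [hmin x hx]]
  simp [List.find?_cons, hf]

theorem all_range_iff {f : ℕ → Bool} {n : ℕ} :
    (List.range n).all f = true ↔ ∀ t < n, f t = true := by
  simp [List.all_eq_true]

/-! ### Basic facts about `pref` -/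

theorem length_pref (X : CSeq) (n : ℕ) : (pref X n).length = n := by simp [pref]

theorem pref_succ (X : CSeq) (n : ℕ) : pref X (n + 1) = pref X n ++ [X n] := by
  simp [pref, List.range_succ]

theorem getD_eq_getElem {l : BStr} {i : ℕ} (h : i < l.length) (d : Bool) :
    l.getD i d = l[i] := by
  rw [List.getD_eq_getElem?_getD, List.getElem?_eq_getElem h]
  rfl

theorem getElem_pref (X : CSeq) {n i : ℕ} (h1 : i < (pref X n).length) :
    (pref X n)[i] = X i := by
  simp [pref]

theorem getD_pref (X : CSeq) {n i : ℕ} (h : i < n) : (pref X n).getD i false = X i := by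
  rw [getD_eq_getElem (by simpa [length_pref] using h), getElem_pref]

theorem take_pref (X : CSeq) {m n : ℕ} (h : m ≤ n) : (pref X n).take m = pref X m := by
  simp [pref, ← List.map_take, List.take_range, Nat.min_eq_left h]

theorem pref_prefix (X : CSeq) {m n : ℕ} (h : m ≤ n) : pref X m <+: pref X n := by
  rw [← take_pref X h]
  exact List.take_prefix _ _

theorem take_congr {σ τ : BStr} (h : σ <+: τ) {j : ℕ} (hj : j ≤ σ.length) :
    τ.take j = σ.take j := by
  obtain ⟨r, rfl⟩ := h
  exact List.take_append_of_le_length hj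

theorem getD_congr {σ τ : BStr} (h : σ <+: τ) {i : ℕ} (hi : i < σ.length) :
    τ.getD i false = σ.getD i false := by
  obtain ⟨r, rfl⟩ := h
  exact List.getD_append _ _ _ _ hi

/-! ### The machine -/

/-- Stage-`s` approximation to the halting problem. -/
def kStep (s n : ℕ) : Bool := (evaln s (Denumerable.ofNat Code n) n).isSome

/-- Stage-`s` approximation to `pref chiK k`. -/
def prefApprox (s k : ℕ) : BStr := (List.range k).map (kStep s)

def jArg (p : ℕ) : ℕ := p.unpair.1
def kArg (p : ℕ) : ℕ := p.unpair.2.unpair.1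
def sArg (p : ℕ) : ℕ := p.unpair.2.unpair.2

/-- `Hfun c σ p t`: the Σ⁰₂-witness `p = ⟨j,k,s₀⟩` (claiming that the
`j`-prefix of the oracle is accepted with halting-problem-prefix of length `k`,
stable from stage `s₀` on) is not yet refuted at time `t`. -/
def Hfun (c : Code) (σ : BStr) (p t : ℕ) : Bool :=
  (decide (evaln (sArg p) c
      (encode ((σ.take (jArg p), prefApprox (sArg p) (kArg p)) : BStr × BStr)) =
      some (encode true))) &&
  decide (prefApprox (max t (sArg p)) (kArg p) = prefApprox (sArg p) (kArg p))

def validB (c : Code) (σ : BStr) (p s : ℕ) : Bool :=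
  (List.range (s + 1)).all fun t => Hfun c σ p t

def minC (c : Code) (σ : BStr) (s : ℕ) : Option ℕ :=
  (List.range (s + 1)).find? fun p => validB c σ p s

def greenB (c : Code) (σ : BStr) (s : ℕ) : Bool :=
  (minC c σ s).isSome && decide (minC c σ s = minC c σ (s - 1))

def dcount (c : Code) (σ : BStr) (s : ℕ) : ℕ :=
  ((List.range s).filter fun t => !greenB c σ t).length

def blockB (c : Code) (σ : BStr) (s : ℕ) : BStr :=
  bif greenB c σ s then [false, false] else [true, σ.getD (dcount c σ s) false]

def outF (c : Code) (σ : BStr) : BStr := (List.range σ.length).flatMap (blockB c σ)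

/-! ### Consistency under extension of the oracle prefix -/

theorem Hfun_congr {c : Code} {σ τ : BStr} (h : σ <+: τ) {p t : ℕ} (hj : jArg p ≤ σ.length) :
    Hfun c τ p t = Hfun c σ p t := by
  unfold Hfun
  rw [take_congr h hj]

theorem validB_congr {c : Code} {σ τ : BStr} (h : σ <+: τ) {p s : ℕ} (hj : jArg p ≤ σ.length) :
    validB c τ p s = validB c σ p s := by
  unfold validB
  congr 1
  funext t
  exact Hfun_congr h hj

theorem minC_congr {c : Code} {σ τ : BStr} (h : σ <+: τ) {s : ℕ} (hs : s < σ.length) :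
    minC c τ s = minC c σ s := by
  unfold minC
  refine find?_congr _ fun p hp => ?_
  have hp' : p ≤ s := by simpa [Nat.lt_succ_iff] using hp
  exact validB_congr h (le_trans (Nat.unpair_left_le p) (by omega))

theorem greenB_congr {c : Code} {σ τ : BStr} (h : σ <+: τ) {s : ℕ} (hs : s < σ.length) :
    greenB c τ s = greenB c σ s := by
  unfold greenB
  rw [minC_congr h hs, minC_congr h (by omega : s - 1 < σ.length)]

theorem dcount_congr {c : Code} {σ τ : BStr} (h : σ <+: τ) {s : ℕ} (hs : s ≤ σ.length) :
    dcount c τ s = dcount c σ s := by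
  unfold dcount
  refine congrArg List.length (List.filter_congr fun t ht => ?_)
  have ht' : t < s := by simpa using ht
  rw [greenB_congr h (by omega)]

theorem dcount_le (c : Code) (σ : BStr) (s : ℕ) : dcount c σ s ≤ s := by
  have := List.length_filter_le (fun t => !greenB c σ t) (List.range s)
  simpa [dcount] using this

theorem blockB_congr {c : Code} {σ τ : BStr} (h : σ <+: τ) {s : ℕ} (hs : s < σ.length) :
    blockB c τ s = blockB c σ s := by
  unfold blockB
  rw [greenB_congr h hs, dcount_congr h (by omega)]
  rcases greenB c σ s with _ | _
  · rw [getD_congr h (lt_of_le_of_lt (dcount_le c σ s) hs)]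
  · rfl

theorem length_blockB (c : Code) (σ : BStr) (s : ℕ) : (blockB c σ s).length = 2 := by
  unfold blockB
  cases greenB c σ s <;> rfl

theorem length_outF (c : Code) (σ : BStr) : (outF c σ).length = 2 * σ.length := by
  unfold outF
  rw [length_flatMap_two _ fun x _ => length_blockB c σ x, List.length_range]

theorem outF_append {c : Code} {σ τ : BStr} (h : σ <+: τ) :
    outF c τ = outF c σ ++
      (List.range (τ.length - σ.length)).flatMap fun i => blockB c τ (σ.length + i) := by
  have hle : σ.length ≤ τ.length := h.length_le
  conv_lhs => rw [outF, show τ.length = σ.length + (τ.length - σ.length) by omega,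
    List.range_add, List.flatMap_append]
  congr 1
  · rw [outF]
    refine flatMap_congr _ fun t ht => ?_
    exact blockB_congr h (by simpa using ht)
  · rw [List.flatMap_map]

theorem outF_mono {c : Code} {σ τ : BStr} (h : σ <+: τ) : outF c σ <+: outF c τ :=
  ⟨_, (outF_append h).symm⟩

end S9
namespace S9

open Nat.Partrec (Code)
open Nat.Partrec.Code
open Encodable (encode)
open Primrec

universe u v
variable {α : Type u} {β : Type v}

theorem primrec_band [Primcodable α] {f g : α → Bool} (hf : Primrec f) (hg : Primrec g) :
    Primrec fun a => f a && g a :=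
  (Primrec.cond hf hg (const false)).of_eq fun a => by cases f a <;> simp

theorem primrec_bnot [Primcodable α] {f : α → Bool} (hf : Primrec f) :
    Primrec fun a => !(f a) :=
  (Primrec.cond hf (const false) (const true)).of_eq fun a => by cases f a <;> simp

theorem primrec_all [Primcodable α] [Primcodable β] {f : α → List β} {p : α → β → Bool}
    (hf : Primrec f) (hp : Primrec₂ p) : Primrec fun a => (f a).all (p a) := by
  have H := Primrec.list_foldr (σ := Bool) hf (const true)
    (h := fun a bs => p a bs.1 && bs.2)
    (primrec_band (hp.comp fst (fst.comp snd)) (snd.comp snd)).to₂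
  refine H.of_eq fun a => ?_
  induction f a with
  | nil => rfl
  | cons b l ih => simp [List.all_cons, ← ih]

theorem primrec_filter [Primcodable α] [Primcodable β] {f : α → List β} {p : α → β → Bool}
    (hf : Primrec f) (hp : Primrec₂ p) : Primrec fun a => (f a).filter (p a) := by
  have H := Primrec.list_foldr (σ := List β) hf (const [])
    (h := fun a bs => bif p a bs.1 then bs.1 :: bs.2 else bs.2)
    (Primrec.cond (hp.comp fst (fst.comp snd)) ((list_cons (α := β)).comp (fst.comp snd) (snd.comp snd))
      (snd.comp snd)).to₂
  refine H.of_eq fun a => ?_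
  induction f a with
  | nil => rfl
  | cons b l ih =>
    rw [List.foldr_cons, ih, List.filter_cons]
    cases hb : p a b <;> simp [hb]

theorem primrec_find? [Primcodable α] [Primcodable β] {f : α → List β} {p : α → β → Bool}
    (hf : Primrec f) (hp : Primrec₂ p) : Primrec fun a => (f a).find? (p a) := by
  have H := Primrec.list_foldr (σ := Option β) hf (const none)
    (h := fun a bs => bif p a bs.1 then some bs.1 else bs.2)
    (Primrec.cond (hp.comp fst (fst.comp snd)) (option_some.comp (fst.comp snd))
      (snd.comp snd)).to₂
  refine H.of_eq fun a => ?_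
  induction f a with
  | nil => rfl
  | cons b l ih =>
    rw [List.foldr_cons, ih, List.find?_cons]
    cases hb : p a b <;> simp [hb]

theorem primrec_take : Primrec fun q : BStr × ℕ => q.1.take q.2 := by
  have H : Primrec fun q : BStr × ℕ => (List.range (min q.2 q.1.length)).map fun i => q.1.getD i false :=
    Primrec.list_map (list_range.comp (nat_min.comp snd (list_length.comp fst)))
      (((Primrec.list_getD false).comp (fst.comp fst) snd).to₂)
  refine H.of_eq fun ⟨l, j⟩ => ?_
  apply List.ext_getElem
  · simp [List.length_take, Nat.min_comm]
  · intro i h1 h2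
    have hi : i < min j l.length := by simpa using h1
    have hil : i < l.length := lt_of_lt_of_le hi (min_le_right _ _)
    simp [List.getElem_take, List.getElem?_eq_getElem hil]

theorem primrec_kStep : Primrec fun q : ℕ × ℕ => kStep q.1 q.2 :=
  Primrec.option_isSome.comp (primrec_evaln.comp
    ((Primrec.pair (Primrec.pair fst ((Primrec.ofNat Code).comp snd)) snd)))

theorem primrec_prefApprox : Primrec fun q : ℕ × ℕ => prefApprox q.1 q.2 :=
  Primrec.list_map (list_range.comp snd) ((primrec_kStep.comp ((fst.comp fst).pair snd)).to₂)

theorem primrec_Hfun (c : Code) : Primrec fun a : BStr × ℕ × ℕ => Hfun c a.1 a.2.1 a.2.2 := by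
  unfold Hfun jArg kArg sArg
  have hp : Primrec fun a : BStr × ℕ × ℕ => a.2.1 := fst.comp snd
  have ht : Primrec fun a : BStr × ℕ × ℕ => a.2.2 := snd.comp snd
  have hs : Primrec fun a : BStr × ℕ × ℕ => a.2.1.unpair.2.unpair.2 :=
    snd.comp (Primrec.unpair.comp (snd.comp (Primrec.unpair.comp hp)))
  have hk : Primrec fun a : BStr × ℕ × ℕ => a.2.1.unpair.2.unpair.1 :=
    fst.comp (Primrec.unpair.comp (snd.comp (Primrec.unpair.comp hp)))
  have hj : Primrec fun a : BStr × ℕ × ℕ => a.2.1.unpair.1 :=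
    fst.comp (Primrec.unpair.comp hp)
  have htake : Primrec fun a : BStr × ℕ × ℕ => a.1.take a.2.1.unpair.1 :=
    primrec_take.comp (fst.pair hj)
  have hpa : Primrec fun a : BStr × ℕ × ℕ =>
      prefApprox a.2.1.unpair.2.unpair.2 a.2.1.unpair.2.unpair.1 :=
    primrec_prefApprox.comp (hs.pair hk)
  have henc : Primrec fun a : BStr × ℕ × ℕ =>
      encode ((a.1.take a.2.1.unpair.1,
        prefApprox a.2.1.unpair.2.unpair.2 a.2.1.unpair.2.unpair.1) : BStr × BStr) :=
    Primrec.encode.comp (htake.pair hpa)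
  have heval : Primrec fun a : BStr × ℕ × ℕ =>
      evaln a.2.1.unpair.2.unpair.2 c
        (encode ((a.1.take a.2.1.unpair.1,
          prefApprox a.2.1.unpair.2.unpair.2 a.2.1.unpair.2.unpair.1) : BStr × BStr)) :=
    primrec_evaln.comp ((hs.pair (const c)).pair henc)
  have hmax : Primrec fun a : BStr × ℕ × ℕ => max a.2.2 a.2.1.unpair.2.unpair.2 :=
    Primrec.nat_max.comp ht hs
  have hpa2 : Primrec fun a : BStr × ℕ × ℕ =>
      prefApprox (max a.2.2 a.2.1.unpair.2.unpair.2) a.2.1.unpair.2.unpair.1 :=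
    primrec_prefApprox.comp (hmax.pair hk)
  exact primrec_band (Primrec.eq.comp heval (const (some (encode true)))).decide
    (Primrec.eq.comp hpa2 hpa).decide

theorem primrec_validB (c : Code) :
    Primrec fun a : BStr × ℕ × ℕ => validB c a.1 a.2.1 a.2.2 := by
  unfold validB
  exact primrec_all (list_range.comp (succ.comp (snd.comp snd)))
    (((primrec_Hfun c).comp ((fst.comp fst).pair
      (((fst.comp (snd.comp fst))).pair snd))).to₂)

theorem primrec_minC (c : Code) : Primrec fun a : BStr × ℕ => minC c a.1 a.2 := by
  unfold minC
  exact primrec_find? (list_range.comp (succ.comp snd))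
    (((primrec_validB c).comp ((fst.comp fst).pair (snd.pair (snd.comp fst)))).to₂)

theorem primrec_greenB (c : Code) : Primrec fun a : BStr × ℕ => greenB c a.1 a.2 := by
  unfold greenB
  exact primrec_band (Primrec.option_isSome.comp (primrec_minC c))
    (Primrec.eq.comp (primrec_minC c)
      ((primrec_minC c).comp (fst.pair (nat_sub.comp snd (const 1))))).decide

theorem primrec_dcount (c : Code) : Primrec fun a : BStr × ℕ => dcount c a.1 a.2 := by
  unfold dcount
  exact list_length.comp (primrec_filter (list_range.comp snd)
    ((primrec_bnot ((primrec_greenB c).comp ((fst.comp fst).pair snd))).to₂))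

theorem primrec_blockB (c : Code) : Primrec fun a : BStr × ℕ => blockB c a.1 a.2 := by
  unfold blockB
  exact Primrec.cond (primrec_greenB c) (const [false, false])
    ((list_cons (α := Bool)).comp (const true)
      ((list_cons (α := Bool)).comp
        ((Primrec.list_getD false).comp fst (primrec_dcount c)) (const [])))

theorem primrec_outF (c : Code) : Primrec fun σ : BStr => outF c σ := by
  unfold outF
  exact Primrec.list_flatMap (list_range.comp list_length)
    (((primrec_blockB c).comp Primrec.id).to₂)

/-- The monotone machine determined by the code `c`. -/
def Mach (c : Code) : MonotoneMachine where
  eval := fun σ => some (outF c σ)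
  comp := (Primrec.option_some.comp (primrec_outF c)).to_comp
  mono := fun σ τ a b h ha hb => by
    obtain rfl : outF c σ = a := Option.some.inj ha
    obtain rfl : outF c τ = b := Option.some.inj hb
    exact outF_mono h

theorem totalOn_Mach (c : Code) (X : CSeq) : TotalOn (Mach c) X := fun n =>
  ⟨n + 1, outF c (pref X (n + 1)), rfl, by rw [length_outF, length_pref]; omega⟩

end S9
namespace S9

open Nat.Partrec (Code)

theorem eval_Mach (c : Code) (σ : BStr) : (Mach c).eval σ = some (outF c σ) := rfl

theorem evalSeq_Mach (c : Code) (X : CSeq) {n k : ℕ} (hk : n < 2 * k) :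
    evalSeq (Mach c) X n = (outF c (pref X k)).getD n false := by
  have hex : ∃ k' a, (Mach c).eval (pref X k') = some a ∧ n < a.length :=
    ⟨k, outF c (pref X k), rfl, by rw [length_outF, length_pref]; exact hk⟩
  unfold evalSeq
  split
  case isFalse h' => exact absurd hex h'
  case isTrue h' =>
    obtain ⟨ha, hlen⟩ := h'.choose_spec.choose_spec
    have ha' : h'.choose_spec.choose = outF c (pref X h'.choose) :=
      (Option.some.inj ha).symm
    rw [ha'] at hlen ⊢
    rcases le_total h'.choose k with hle | hle
    · have hpre := outF_mono (c := c) (pref_prefix X hle)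
      exact (getD_congr hpre hlen).symm
    · have hpre := outF_mono (c := c) (pref_prefix X hle)
      exact getD_congr hpre (by rw [length_outF, length_pref]; exact hk)

/-- Greenness of stage `s` along the oracle `X`. -/
def greenX (c : Code) (X : CSeq) (s : ℕ) : Bool := greenB c (pref X (s + 1)) s

/-- Number of non-green stages before `s` along `X`. -/
def dcX (c : Code) (X : CSeq) (s : ℕ) : ℕ :=
  ((List.range s).filter fun t => !greenX c X t).length

theorem dcX_eq (c : Code) (X : CSeq) (s : ℕ) : dcount c (pref X (s + 1)) s = dcX c X s := by
  unfold dcount dcX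
  refine congrArg List.length (List.filter_congr fun t ht => ?_)
  have ht' : t < s := by simpa using ht
  rw [greenB_congr (c := c) (pref_prefix X (show t + 1 ≤ s + 1 by omega)) (by rw [length_pref]; omega)]
  rfl

theorem dcX_le (c : Code) (X : CSeq) (s : ℕ) : dcX c X s ≤ s := by
  have := List.length_filter_le (fun t => !greenX c X t) (List.range s)
  simpa [dcX] using this

theorem dcX_succ (c : Code) (X : CSeq) (s : ℕ) :
    dcX c X (s + 1) = dcX c X s + (bif greenX c X s then 0 else 1) := by
  unfold dcX
  rw [List.range_succ, List.filter_append, List.length_append]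
  cases hg : greenX c X s <;> simp [hg]

theorem dcX_mono (c : Code) (X : CSeq) {s s' : ℕ} (h : s ≤ s') : dcX c X s ≤ dcX c X s' := by
  induction s', h using Nat.le_induction with
  | base => exact le_refl _
  | succ n hn ih => rw [dcX_succ]; omega

theorem dcX_stage_unique (c : Code) (X : CSeq) {s s' : ℕ} (hg : greenX c X s = false)
    (hg' : greenX c X s' = false) (h : dcX c X s = dcX c X s') : s = s' := by
  rcases lt_trichotomy s s' with hlt | heq | hlt
  · have h1 : dcX c X s + 1 ≤ dcX c X s' := by
      have := dcX_mono c X (show s + 1 ≤ s' by omega)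
      rw [dcX_succ, hg] at this
      simpa using this
    omega
  · exact heq
  · have h1 : dcX c X s' + 1 ≤ dcX c X s := by
      have := dcX_mono c X (show s' + 1 ≤ s by omega)
      rw [dcX_succ, hg'] at this
      simpa using this
    omega

theorem outF_pref_succ (c : Code) (X : CSeq) (m : ℕ) :
    outF c (pref X (m + 1)) = outF c (pref X m) ++ blockB c (pref X (m + 1)) m := by
  have h := outF_append (c := c) (pref_prefix X (show m ≤ m + 1 by omega))
  rw [h, length_pref, length_pref]
  congr 1
  rw [show m + 1 - m = 1 by omega, show List.range 1 = [0] from rfl]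
  simp

theorem O_even (c : Code) (X : CSeq) (s : ℕ) :
    evalSeq (Mach c) X (2 * s) = !(greenX c X s) := by
  rw [evalSeq_Mach c X (show 2 * s < 2 * (s + 1) by omega), outF_pref_succ,
    List.getD_append_right _ _ _ _ (by rw [length_outF, length_pref])]
  rw [length_outF, length_pref]
  cases hg : greenX c X s
  · have : greenB c (pref X (s + 1)) s = false := hg
    simp [blockB, this]
  · have : greenB c (pref X (s + 1)) s = true := hg
    simp [blockB, this]

theorem O_odd (c : Code) (X : CSeq) (s : ℕ) :
    evalSeq (Mach c) X (2 * s + 1) =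
      (bif greenX c X s then false else X (dcX c X s)) := by
  rw [evalSeq_Mach c X (show 2 * s + 1 < 2 * (s + 1) by omega), outF_pref_succ,
    List.getD_append_right _ _ _ _ (by rw [length_outF, length_pref]; omega)]
  rw [length_outF, length_pref, show 2 * s + 1 - 2 * s = 1 by omega]
  cases hg : greenX c X s
  · have hgb : greenB c (pref X (s + 1)) s = false := hg
    have hd : dcount c (pref X (s + 1)) s < s + 1 := by
      rw [dcX_eq]; exact lt_of_le_of_lt (dcX_le c X s) (by omega)
    simp only [blockB, hgb, cond_false]
    rw [show ([true, (pref X (s+1)).getD (dcount c (pref X (s+1)) s) false] : BStr).getD 1 false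
        = (pref X (s+1)).getD (dcount c (pref X (s+1)) s) false from rfl]
    rw [getD_pref X (by omega : dcount c (pref X (s+1)) s < s + 1), dcX_eq]
  · have hgb : greenB c (pref X (s + 1)) s = true := hg
    simp [blockB, hgb]

end S9
namespace S9

open Nat.Partrec (Code)
open Nat.Partrec.Code
open Encodable (encode)

theorem chiK_true_iff (n : ℕ) : chiK n = true ↔ n ∈ K0 := by
  unfold chiK
  exact @decide_eq_true_iff _ (Classical.propDecidable _)

theorem kStep_mono {s s' n : ℕ} (hss' : s ≤ s') (h : kStep s n = true) : kStep s' n = true := by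
  unfold kStep at *
  obtain ⟨a, ha⟩ := Option.isSome_iff_exists.mp h
  exact Option.isSome_iff_exists.mpr ⟨a, evaln_mono hss' ha⟩

theorem kStep_lim (n : ℕ) : ∃ s₀, ∀ s ≥ s₀, kStep s n = chiK n := by
  by_cases h : n ∈ K0
  · obtain ⟨a, ha⟩ := Part.dom_iff_mem.mp h
    obtain ⟨k, hk⟩ := evaln_complete.mp ha
    refine ⟨k, fun s hs => ?_⟩
    rw [(chiK_true_iff n).mpr h]
    exact kStep_mono hs (Option.isSome_iff_exists.mpr ⟨a, hk⟩)
  · refine ⟨0, fun s _ => ?_⟩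
    have h1 : kStep s n = false := by
      by_contra hh
      rw [Bool.not_eq_false] at hh
      obtain ⟨a, ha⟩ := Option.isSome_iff_exists.mp hh
      exact h (Part.dom_iff_mem.mpr ⟨a, evaln_sound ha⟩)
    rw [h1]
    by_contra hh
    rw [eq_comm, Bool.not_eq_false, chiK_true_iff] at hh
    exact h hh

theorem length_prefApprox (s k : ℕ) : (prefApprox s k).length = k := by simp [prefApprox]

theorem prefApprox_lim (k : ℕ) : ∃ s₀, ∀ s ≥ s₀, prefApprox s k = pref chiK k := by
  induction k with
  | zero => exact ⟨0, fun s _ => by simp [prefApprox, pref]⟩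
  | succ k ih =>
    obtain ⟨s₁, h1⟩ := ih
    obtain ⟨s₂, h2⟩ := kStep_lim k
    refine ⟨max s₁ s₂, fun s hs => ?_⟩
    rw [prefApprox, List.range_succ, List.map_append, pref, List.range_succ, List.map_append]
    rw [show List.map (kStep s) (List.range k) = prefApprox s k from rfl,
      show List.map chiK (List.range k) = pref chiK k from rfl,
      h1 s (le_trans (le_max_left _ _) hs)]
    simp [h2 s (le_trans (le_max_right _ _) hs)]

theorem getElem_prefApprox (s k i : ℕ) (h1 : i < (prefApprox s k).length) :
    (prefApprox s k)[i] = kStep s i := by simp [prefApprox]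

theorem prefApprox_ne_persist {s₀ a b k : ℕ} (ha : s₀ ≤ a) (hab : a ≤ b)
    (h : prefApprox a k ≠ prefApprox s₀ k) : prefApprox b k ≠ prefApprox s₀ k := by
  intro heq
  apply h
  apply List.ext_getElem (by simp [length_prefApprox])
  intro i hi1 hi2
  rw [getElem_prefApprox, getElem_prefApprox]
  have hb : kStep b i = kStep s₀ i := by
    have h1 : i < (prefApprox b k).length := by simpa [length_prefApprox] using hi1
    have h2 : i < (prefApprox s₀ k).length := by simpa [length_prefApprox] using hi1
    rw [← getElem_prefApprox b k i h1, ← getElem_prefApprox s₀ k i h2]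
    simp only [heq]
  cases hs0 : kStep s₀ i
  · cases hsa : kStep a i
    · rfl
    · have := kStep_mono hab hsa
      rw [hb] at this
      rw [this] at hs0
      exact absurd hs0 (by simp)
  · exact kStep_mono ha hs0

/-- `Hfun` along genuine prefixes of `X`. -/
def HXf (c : Code) (X : CSeq) (p t : ℕ) : Bool := Hfun c (pref X (jArg p)) p t

theorem Hfun_eq_HXf (c : Code) (X : CSeq) {p : ℕ} (m : ℕ) (hj : jArg p ≤ m) (t : ℕ) :
    Hfun c (pref X m) p t = HXf c X p t := by
  unfold HXf
  exact Hfun_congr (pref_prefix X hj) (by rw [length_pref])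

/-- The witness `p` is never refuted along `X`. -/
def Perm (c : Code) (X : CSeq) (p : ℕ) : Prop := ∀ t, HXf c X p t = true

theorem HXf_persist {c : Code} {X : CSeq} {p t t' : ℕ} (htt' : t ≤ t')
    (h : HXf c X p t = false) : HXf c X p t' = false := by
  unfold HXf Hfun at *
  rcases Bool.and_eq_false_iff.mp h with h1 | h2
  · rw [Bool.and_eq_false_iff]; exact Or.inl h1
  · rw [Bool.and_eq_false_iff]
    refine Or.inr (decide_eq_false ?_)
    have hne : prefApprox (max t (sArg p)) (kArg p) ≠ prefApprox (sArg p) (kArg p) :=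
      of_decide_eq_false h2
    exact prefApprox_ne_persist (le_max_right _ _) (max_le_max_right _ htt') hne

theorem validB_pref_iff (c : Code) (X : CSeq) {p s m : ℕ} (hp : p ≤ s) (hs : s < m) :
    validB c (pref X m) p s = true ↔ ∀ t ≤ s, HXf c X p t = true := by
  unfold validB
  rw [all_range_iff]
  constructor
  · intro h t ht
    rw [← Hfun_eq_HXf c X m (le_trans (Nat.unpair_left_le p) (by omega)) t]
    exact h t (by omega)
  · intro h t ht
    rw [Hfun_eq_HXf c X m (le_trans (Nat.unpair_left_le p) (by omega)) t]
    exact h t (by omega)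

section WithCode

variable {c : Code} {R : BStr → BStr → Bool} {Q : Set BStr}
variable (hc : ∀ x : BStr × BStr, c.eval (encode x) = Part.some (encode (R x.1 x.2)))
variable (hR : ∀ σ, σ ∈ Q ↔ ∃ k, R σ (pref chiK k) = true)

include hc hR

theorem perm_iff (X : CSeq) : (∃ p, Perm c X p) ↔ X ∈ cyl Q := by
  constructor
  · rintro ⟨p, hp⟩
    have h0 := hp 0
    unfold HXf Hfun at h0
    rw [Bool.and_eq_true] at h0
    obtain ⟨h1, _⟩ := h0
    have h1' : evaln (sArg p) c
        (encode (((pref X (jArg p)).take (jArg p), prefApprox (sArg p) (kArg p)) : BStr × BStr)) =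
        some (encode true) := of_decide_eq_true h1
    -- the approximation used is in fact correct
    obtain ⟨s₁, hs₁⟩ := prefApprox_lim (kArg p)
    have hstable : prefApprox (sArg p) (kArg p) = pref chiK (kArg p) := by
      have ht := hp s₁
      unfold HXf Hfun at ht
      rw [Bool.and_eq_true] at ht
      have h2' : prefApprox (max s₁ (sArg p)) (kArg p) = prefApprox (sArg p) (kArg p) :=
        of_decide_eq_true ht.2
      rw [← h2']
      exact hs₁ _ (le_max_left _ _)
    have htk : (pref X (jArg p)).take (jArg p) = pref X (jArg p) :=
      List.take_of_length_le (by rw [length_pref])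
    rw [htk, hstable] at h1'
    have hmem : encode true ∈ c.eval (encode ((pref X (jArg p), pref chiK (kArg p)) : BStr × BStr)) :=
      evaln_sound h1'
    rw [hc _] at hmem
    have := Part.mem_some_iff.mp hmem
    have hRtrue : R (pref X (jArg p)) (pref chiK (kArg p)) = true :=
      (Encodable.encode_injective this).symm
    have hQmem : pref X (jArg p) ∈ Q := (hR _).mpr ⟨kArg p, hRtrue⟩
    exact ⟨pref X (jArg p), hQmem, by rw [length_pref]⟩
  · rintro ⟨σ, hσQ, hpref⟩
    obtain ⟨k, hRk⟩ := (hR σ).mp hσQ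
    have heval : c.eval (encode ((σ, pref chiK k) : BStr × BStr)) = Part.some (encode true) := by
      rw [hc _, hRk]
    have hmem : encode true ∈ c.eval (encode ((σ, pref chiK k) : BStr × BStr)) := by
      rw [heval]; exact Part.mem_some _
    obtain ⟨s₁, hs₁⟩ := evaln_complete.mp hmem
    obtain ⟨s₂, hs₂⟩ := prefApprox_lim k
    set s₀ := max s₁ s₂ with hs₀
    set p := Nat.pair σ.length (Nat.pair k s₀) with hpdef
    have hj : jArg p = σ.length := by simp [jArg, hpdef]
    have hk : kArg p = k := by simp [kArg, hpdef]
    have hs : sArg p = s₀ := by simp [sArg, hpdef]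
    have hpa : prefApprox s₀ k = pref chiK k := hs₂ _ (le_max_right _ _)
    refine ⟨p, fun t => ?_⟩
    unfold HXf Hfun
    rw [Bool.and_eq_true, hj, hk, hs]
    constructor
    · apply decide_eq_true
      have htk : (pref X σ.length).take σ.length = pref X σ.length :=
        List.take_of_length_le (by rw [length_pref])
      rw [htk, hpref, hpa]
      exact evaln_mono (le_max_left _ _) hs₁
    · apply decide_eq_true
      rw [hpa]
      exact hs₂ _ (le_trans (le_max_right _ _) (le_max_right _ _))

theorem green_stable {X : CSeq} (hmem : X ∈ cyl Q) : ∃ S, ∀ s ≥ S, greenX c X s = true := by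
  classical
  have hP : ∃ p, Perm c X p := (perm_iff hc hR X).mpr hmem
  have hpstar : Perm c X (Nat.find hP) := Nat.find_spec hP
  set pstar := Nat.find hP with hpsdef
  have hfail : ∀ q < pstar, ∃ t, HXf c X q t = false := by
    intro q hq
    have := Nat.find_min hP hq
    rw [Perm] at this
    push_neg at this
    obtain ⟨t, ht⟩ := this
    exact ⟨t, by simpa using ht⟩
  set T := (Finset.range pstar).sup
    (fun q => if h : ∃ t, HXf c X q t = false then Nat.find h else 0) with hT
  have hTfail : ∀ q < pstar, HXf c X q T = false := by
    intro q hq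
    have hex := hfail q hq
    have hle : Nat.find hex ≤ T := by
      have h1 := Finset.le_sup (f := fun q => if h : ∃ t, HXf c X q t = false then Nat.find h else 0)
        (Finset.mem_range.mpr hq)
      have h2 : (fun q => if h : ∃ t, HXf c X q t = false then Nat.find h else 0) q
          = Nat.find hex := by
        show (if h : ∃ t, HXf c X q t = false then Nat.find h else 0) = Nat.find hex
        rw [dif_pos hex]
      rw [show (if h : ∃ t, HXf c X q t = false then Nat.find h else 0) = Nat.find hex from h2] at h1
      exact h1
    exact HXf_persist hle (Nat.find_spec hex)
  have key : ∀ u, max pstar T ≤ u → ∀ m, u < m → minC c (pref X m) u = some pstar := by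
    intro u hu m hum
    apply find?_range_eq_some (by omega : pstar < u + 1)
    · rw [validB_pref_iff c X (by omega) hum]
      exact fun t _ => hpstar t
    · intro q hq
      rw [← Bool.not_eq_true, validB_pref_iff c X (by omega) hum]
      push_neg
      refine ⟨u, le_refl u, ?_⟩
      rw [HXf_persist (le_trans (le_max_right _ _) hu) (hTfail q hq)]
      simp
  refine ⟨max pstar T + 1, fun s hs => ?_⟩
  unfold greenX greenB
  rw [key s (by omega) (s + 1) (by omega), key (s - 1) (by omega) (s + 1) (by omega)]
  simp

theorem infinitely_nongreen {X : CSeq} (hnm : X ∉ cyl Q) :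
    ∀ S, ∃ s ≥ S, greenX c X s = false := by
  by_contra h
  push_neg at h
  obtain ⟨S, hS⟩ := h
  have hSgreen : ∀ s ≥ S, greenX c X s = true := by
    intro s hs
    have := hS s hs
    simpa using this
  have hconst : ∀ s, S ≤ s → minC c (pref X (s + 1)) s = minC c (pref X (S + 1)) S := by
    intro s hs
    induction s, hs using Nat.le_induction with
    | base => rfl
    | succ n hn ih =>
      have hg := hSgreen (n + 1) (by omega)
      unfold greenX greenB at hg
      rw [Bool.and_eq_true] at hg
      have h2 := of_decide_eq_true hg.2
      rw [show n + 1 - 1 = n by omega] at h2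
      rw [h2, minC_congr (c := c) (pref_prefix X (show n + 1 ≤ n + 2 by omega))
        (by rw [length_pref]; omega)]
      exact ih
  have hg0 := hSgreen S (le_refl S)
  unfold greenX greenB at hg0
  rw [Bool.and_eq_true] at hg0
  obtain ⟨p₀, hp₀⟩ := Option.isSome_iff_exists.mp hg0.1
  have hperm : Perm c X p₀ := by
    intro t
    by_contra hf
    rw [Bool.not_eq_true] at hf
    set s := max S t with hsdef
    have hmc : minC c (pref X (s + 1)) s = some p₀ := by
      rw [hconst s (le_max_left _ _)]
      exact hp₀
    have hvalid := List.find?_some hmc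
    have hps : p₀ ≤ s := by
      have := List.mem_of_find?_eq_some hmc
      simp only [List.mem_range] at this
      omega
    rw [validB_pref_iff c X hps (by omega)] at hvalid
    have := hvalid t (le_max_right _ _)
    rw [hf] at this
    exact absurd this (by simp)
  exact hnm ((perm_iff hc hR X).mp ⟨p₀, hperm⟩)

end WithCode

end S9
namespace S9

open MeasureTheory

theorem measurable_realDigits : Measurable realDigits := by
  apply measurable_pi_lambda
  intro i
  have heq : (fun x : ℝ => realDigits x i) =
      fun x => if (1 : ℝ) / 2 ≤ Int.fract (x * 2 ^ i) then true else false := by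
    funext x
    by_cases h : (1 : ℝ) / 2 ≤ Int.fract (x * 2 ^ i) <;>
      simp [realDigits, h]
  rw [heq]
  exact Measurable.ite
    (measurableSet_le measurable_const (measurable_fract.comp (measurable_id.mul_const _)))
    measurable_const measurable_const

theorem measurableSet_prefSet (σ : BStr) : MeasurableSet {Y : CSeq | pref Y σ.length = σ} := by
  have heq : {Y : CSeq | pref Y σ.length = σ} =
      ⋂ i ∈ Finset.range σ.length, {Y : CSeq | Y i = σ.getD i false} := by
    ext Y
    simp only [Set.mem_setOf_eq, Set.mem_iInter, Finset.mem_range]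
    constructor
    · intro h i hi
      rw [← h, getD_pref Y hi]
    · intro h
      apply List.ext_getElem (by rw [length_pref])
      intro i h1 h2
      rw [getElem_pref Y h1, ← getD_eq_getElem h2, h i (by rwa [length_pref] at h1)]
  rw [heq]
  refine MeasurableSet.biInter (Set.to_countable _) fun i _ => ?_
  have hpre : {Y : CSeq | Y i = σ.getD i false} =
      (fun Y : CSeq => Y i) ⁻¹' {σ.getD i false} := rfl
  rw [hpre]
  exact measurable_pi_apply i (by trivial)

theorem measurableSet_cyl (S : Set BStr) : MeasurableSet (cyl S) := by
  have heq : cyl S = ⋃ σ ∈ S, {Y : CSeq | pref Y σ.length = σ} := by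
    ext Y
    simp [cyl]
  rw [heq]
  exact MeasurableSet.biUnion (Set.to_countable S) fun σ _ => measurableSet_prefSet σ

/-- the natural number with (big-endian) binary digits `σ` -/
def natVal (σ : BStr) : ℕ := σ.foldl (fun a b => 2 * a + (bif b then 1 else 0)) 0

theorem natVal_concat (l : BStr) (b : Bool) :
    natVal (l ++ [b]) = 2 * natVal l + (bif b then 1 else 0) := by
  unfold natVal
  rw [List.foldl_append]
  rfl

theorem floor_two_mul (y : ℝ) : ⌊2 * y⌋ = 2 * ⌊y⌋ + ⌊2 * Int.fract y⌋ := by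
  conv_lhs => rw [show y = (⌊y⌋ : ℝ) + Int.fract y from (Int.floor_add_fract y).symm]
  rw [mul_add, show (2 : ℝ) * (⌊y⌋ : ℝ) = ((2 * ⌊y⌋ : ℤ) : ℝ) by push_cast; ring, add_comm,
    Int.floor_add_intCast]
  ring

theorem floor_two_fract (y : ℝ) :
    ⌊2 * Int.fract y⌋ = (bif decide ((1:ℝ)/2 ≤ Int.fract y) then 1 else 0) := by
  have h0 := Int.fract_nonneg y
  have h1 := Int.fract_lt_one y
  by_cases h : (1:ℝ)/2 ≤ Int.fract y
  · rw [decide_eq_true h]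
    show ⌊2 * Int.fract y⌋ = 1
    rw [Int.floor_eq_iff]
    constructor <;> push_cast <;> linarith
  · rw [decide_eq_false h]
    show ⌊2 * Int.fract y⌋ = 0
    rw [Int.floor_eq_iff]
    constructor <;> push_cast <;> linarith

theorem floor_pref {x : ℝ} (hx0 : 0 ≤ x) (hx1 : x < 1) (n : ℕ) :
    ⌊x * 2 ^ n⌋ = (natVal (pref (realDigits x) n) : ℤ) := by
  induction n with
  | zero =>
    simp only [pow_zero, mul_one, show pref (realDigits x) 0 = [] from rfl]
    show ⌊x⌋ = ((0:ℕ) : ℤ)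
    rw [Nat.cast_zero, Int.floor_eq_zero_iff]
    exact ⟨hx0, hx1⟩
  | succ n ih =>
    have hy : x * 2 ^ (n + 1) = 2 * (x * 2 ^ n) := by ring
    rw [hy, floor_two_mul, ih, pref_succ, natVal_concat]
    have hd : realDigits x n = decide ((1:ℝ)/2 ≤ Int.fract (x * 2 ^ n)) := rfl
    rw [floor_two_fract, ← hd]
    cases realDigits x n <;> norm_num

theorem muC_cyl_singleton (σ : BStr) : μC (cyl {σ}) ≤ (1 / 2 : ENNReal) ^ σ.length := by
  set n := σ.length with hn
  have hA : MeasurableSet (cyl {σ}) := measurableSet_cyl _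
  rw [μC, MeasureTheory.Measure.map_apply measurable_realDigits hA,
    Measure.restrict_apply (measurable_realDigits hA)]
  have h2n : (0:ℝ) < 2 ^ n := by positivity
  have hsub : realDigits ⁻¹' cyl {σ} ∩ Set.Ico (0:ℝ) 1 ⊆
      Set.Ico ((natVal σ : ℝ) / 2 ^ n) (((natVal σ : ℝ) + 1) / 2 ^ n) := by
    rintro x ⟨hx1, hx2⟩
    obtain ⟨τ, hτ, hpref⟩ := hx1
    obtain rfl : τ = σ := hτ
    have hfl := floor_pref hx2.1 hx2.2 n
    rw [hpref] at hfl
    rw [Int.floor_eq_iff] at hfl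
    obtain ⟨hl, hr⟩ := hfl
    constructor
    · rw [div_le_iff₀ h2n]
      push_cast at hl ⊢
      linarith
    · rw [lt_div_iff₀ h2n]
      push_cast at hr ⊢
      linarith
  refine le_trans (measure_mono hsub) ?_
  rw [Real.volume_Ico]
  have harith : ((natVal σ : ℝ) + 1) / 2 ^ n - (natVal σ : ℝ) / 2 ^ n = (1/2 : ℝ) ^ n := by
    field_simp
    rw [← mul_pow]; norm_num
  rw [harith]
  rw [ENNReal.ofReal_pow (by norm_num : (0:ℝ) ≤ 1/2)]
  have hb : ENNReal.ofReal (1/2 : ℝ) = (1/2 : ENNReal) := by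
    rw [show (1/2:ℝ) = 2⁻¹ by norm_num, ENNReal.ofReal_inv_of_pos (by norm_num : (0:ℝ) < 2)]
    norm_num
  rw [hb]

theorem capture (X : CSeq) (i : ℕ) : X ∈ cyl {pref X (i + 1)} :=
  ⟨pref X (i + 1), rfl, by rw [length_pref]⟩

theorem mlrandom_not_computable {X : CSeq} (hrand : MLRandom X) (hcomp : Computable X) :
    False := by
  -- `fun k => pref X k` is computable
  have hP : Computable fun k : ℕ => pref X k := by
    have H := Computable.nat_rec (α := ℕ) (σ := BStr) Computable.id (Computable.const [])
      (h := fun _ p => p.2 ++ [X p.1])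
      (Computable₂.comp Primrec.list_append.to_comp (Computable.snd.comp Computable.snd)
        ((Primrec.list_cons.to_comp).comp (hcomp.comp (Computable.fst.comp Computable.snd))
          (Computable.const [])))
    refine H.of_eq fun n => ?_
    induction n with
    | zero => rfl
    | succ n ih =>
      simp only [id_eq] at ih ⊢
      rw [pref_succ, ← ih]
  set V : ℕ → Set BStr := fun i => {pref X (i + 1)} with hV
  have htest : MLTestIn (fun _ => false) V := by
    constructor
    · refine ⟨fun i σ _ => decide (σ = pref X (i + 1)), ?_, ?_⟩
      · exact (Primrec.eq.decide.to_comp).comp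
          (Computable.fst.comp Computable.snd)
          (hP.comp (Primrec.succ.to_comp.comp Computable.fst))
      · intro i σ
        simp [hV]
    · intro i
      refine le_trans (muC_cyl_singleton (pref X (i + 1))) ?_
      rw [length_pref, pow_succ]
      calc (1/2 : ENNReal) ^ i * (1/2) ≤ (1/2 : ENNReal) ^ i * 1 := by
            apply mul_le_mul_right
            norm_num
        _ = (1/2 : ENNReal) ^ i := mul_one _
  obtain ⟨i, hi⟩ := hrand V htest
  exact hi (capture X i)

end S9
namespace S9

open Nat.Partrec (Code)
open Nat.Partrec.Code

theorem exists_nongreen_stage (c : Code) (X : CSeq)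
    (hinf : ∀ S, ∃ s ≥ S, greenX c X s = false) :
    ∀ d, ∃ s, greenX c X s = false ∧ dcX c X s = d := by
  intro d
  induction d with
  | zero =>
    have hex : ∃ s, greenX c X s = false := by
      obtain ⟨s, _, hs⟩ := hinf 0; exact ⟨s, hs⟩
    refine ⟨Nat.find hex, Nat.find_spec hex, ?_⟩
    unfold dcX
    rw [List.length_eq_zero_iff, List.filter_eq_nil_iff]
    intro t ht
    have ht' : t < Nat.find hex := by simpa using ht
    have := Nat.find_min hex ht'
    rw [Bool.not_eq_false] at this
    simp [this]
  | succ d ih =>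
    obtain ⟨s, hg, hd⟩ := ih
    have hex : ∃ u, greenX c X u = false ∧ s < u := by
      obtain ⟨u, hu1, hu2⟩ := hinf (s + 1)
      exact ⟨u, hu2, by omega⟩
    obtain ⟨hgu, hsu⟩ := Nat.find_spec hex
    refine ⟨Nat.find hex, hgu, ?_⟩
    have hstable : ∀ v, s + 1 ≤ v → v ≤ Nat.find hex → dcX c X v = dcX c X (s + 1) := by
      intro v hv1
      induction v, hv1 using Nat.le_induction with
      | base => intro _; rfl
      | succ w hw ihw =>
        intro hwle
        have hgw : greenX c X w = true := by
          by_contra hh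
          rw [Bool.not_eq_true] at hh
          have := Nat.find_min hex (show w < Nat.find hex by omega)
          push_neg at this
          have := this hh
          omega
        rw [dcX_succ, ihw (by omega), hgw]
        rfl
    rw [hstable (Nat.find hex) (by omega) (le_refl _), dcX_succ, hg, hd]
    rfl

theorem computable_of_output (c : Code) (X : CSeq)
    (hinf : ∀ S, ∃ s ≥ S, greenX c X s = false)
    (hO : Computable (evalSeq (Mach c) X)) : Computable X := by
  set O := evalSeq (Mach c) X with hOdef
  have hOe : ∀ t, O (2 * t) = !(greenX c X t) := fun t => O_even c X t
  have hOo : ∀ t, O (2 * t + 1) = (bif greenX c X t then false else X (dcX c X t)) :=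
    fun t => O_odd c X t
  -- the non-green-stage counter, computed from `O`
  set F : ℕ → ℕ := fun t =>
    Nat.rec 0 (fun y IH => IH + (bif O (2 * y) then 1 else 0)) t with hFdef
  have hFcomp : Computable F := by
    have hmul : Computable fun q : ℕ × ℕ × ℕ => 2 * q.2.1 :=
      (Primrec.nat_mul.comp (Primrec.const 2) (Primrec.fst.comp Primrec.snd)).to_comp
    have H := Computable.nat_rec (α := ℕ) (σ := ℕ) Computable.id (Computable.const 0)
      (h := fun _ p => p.2 + (bif O (2 * p.1) then 1 else 0))
      (Primrec.nat_add.to_comp.comp (Computable.snd.comp Computable.snd)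
        (Computable.cond (hO.comp hmul) (Computable.const 1) (Computable.const 0)))
    exact H.of_eq fun n => by simp [hFdef]
  have hFeq : ∀ t, F t = dcX c X t := by
    intro t
    induction t with
    | zero => rfl
    | succ t ih =>
      have hstep : F (t + 1) = F t + (bif O (2 * t) then 1 else 0) := rfl
      rw [hstep, ih, dcX_succ, hOe t]
      cases greenX c X t <;> rfl
  set PB : ℕ × ℕ → Bool := fun q => O (2 * q.2) && decide (F q.2 = q.1) with hPBdef
  have hPBcomp : Computable PB := by
    have h1 : Computable fun q : ℕ × ℕ => O (2 * q.2) :=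
      hO.comp (Primrec.nat_mul.comp (Primrec.const 2) Primrec.snd).to_comp
    have h2 : Computable fun q : ℕ × ℕ => decide (F q.2 = q.1) :=
      (Primrec.eq.decide.to_comp).comp (hFcomp.comp Computable.snd) Computable.fst
    exact (Computable.cond h1 h2 (Computable.const false)).of_eq fun q => by
      cases hb : O (2 * q.2) <;> simp [hPBdef, hb]
  have hPBiff : ∀ d m, PB (d, m) = true ↔ (greenX c X m = false ∧ dcX c X m = d) := by
    intro d m
    rw [hPBdef]
    simp only [Bool.and_eq_true, decide_eq_true_eq]
    rw [hOe m, hFeq m]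
    cases greenX c X m <;> simp
  set G : ℕ →. Bool := fun d =>
    (Nat.rfind fun t => Part.some (PB (d, t))).map fun t => O (2 * t + 1) with hGdef
  have hg2 : Computable₂ fun (_ : ℕ) (t : ℕ) => O (2 * t + 1) :=
    (hO.comp (Primrec.nat_add.comp
      (Primrec.nat_mul.comp (Primrec.const 2) Primrec.snd) (Primrec.const 1)).to_comp).to₂
  have hG : Partrec G := Partrec.map (Partrec.rfind hPBcomp.partrec.to₂) hg2
  refine Partrec.of_eq_tot hG fun d => ?_
  obtain ⟨s, hgs, hds⟩ := exists_nongreen_stage c X hinf d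
  have hmem : s ∈ Nat.rfind fun t => Part.some (PB (d, t)) := by
    refine Nat.mem_rfind.mpr ?_
    constructor
    · exact Part.mem_some_iff.mpr ((hPBiff d s).mpr ⟨hgs, hds⟩).symm
    · intro m hm
      refine Part.mem_some_iff.mpr ?_
      symm
      rw [← Bool.not_eq_true]
      intro hPB
      obtain ⟨hg', hd'⟩ := (hPBiff d m).mp hPB
      have := dcX_stage_unique c X hg' hgs (by rw [hd', hds])
      omega
  have hval : O (2 * s + 1) = X d := by
    rw [hOo s, hgs, hds]
    rfl
  have hmem2 : X d ∈ Part.map (fun t => O (2 * t + 1)) (Nat.rfind fun t => Part.some (PB (d, t))) := by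
    simpa [hval] using Part.mem_map (f := fun t => O (2 * t + 1)) hmem
  exact hmem2

theorem computable_getD (η : BStr) : Computable fun n : ℕ => η.getD n false :=
  ((Primrec.list_getD false).comp (Primrec.const η) Primrec.id).to_comp

theorem output_eventually_zero (c : Code) (X : CSeq) (S : ℕ)
    (hgreen : ∀ s ≥ S, greenX c X s = true) :
    evalSeq (Mach c) X = fun n => (outF c (pref X S)).getD n false := by
  funext n
  rcases lt_or_ge n (2 * S) with hn | hn
  · rw [evalSeq_Mach c X hn]
  · have hlen : (outF c (pref X S)).length ≤ n := by rw [length_outF, length_pref]; omega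
    rw [List.getD_eq_default _ _ hlen]
    rcases Nat.even_or_odd n with ⟨s, hs⟩ | ⟨s, hs⟩
    · have hsS : S ≤ s := by omega
      rw [show n = 2 * s by omega, O_even, hgreen s hsS]
      rfl
    · have hsS : S ≤ s := by omega
      rw [show n = 2 * s + 1 by omega, O_odd, hgreen s hsS]
      rfl

end S9
/-- for a Σ⁰₂ prefix-free set `Q` there is a monotone machine `M`,
total on every oracle, such that for every Martin-Löf random `X`:
`M(X)` computable ↔ `M(X) = η·0^ω` for some string `η` ↔ `X` has a prefix in `Q`. -/
theorem stmt9 (Q : Set BStr) (hQ : SigmaTwo Q) (hpf : PrefixFree Q) :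
    ∃ M : MonotoneMachine, (∀ X : CSeq, TotalOn M X) ∧
      ∀ X : CSeq, MLRandom X →
        ((Computable (evalSeq M X) ↔ ∃ η : BStr, evalSeq M X = fun n => η.getD n false) ∧
         (Computable (evalSeq M X) ↔ X ∈ cyl Q)) := by
  classical
  obtain ⟨R, hRcomp, hRspec⟩ := hQ
  have hcomp' : Computable fun x : BStr × BStr => R x.1 x.2 := hRcomp
  obtain ⟨c, hc⟩ : ∃ c : Nat.Partrec.Code, ∀ x : BStr × BStr,
      c.eval (Encodable.encode x) = Part.some (Encodable.encode (R x.1 x.2)) := by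
    obtain ⟨c, hc0⟩ := Nat.Partrec.Code.exists_code.1 hcomp'
    refine ⟨c, fun x => ?_⟩
    rw [hc0]
    simp [Encodable.encodek]
  refine ⟨S9.Mach c, S9.totalOn_Mach c, ?_⟩
  intro X hX
  by_cases hcy : X ∈ cyl Q
  · obtain ⟨S, hS⟩ := S9.green_stable hc hRspec hcy
    have hη := S9.output_eventually_zero c X S hS
    exact ⟨⟨fun _ => ⟨S9.outF c (pref X S), hη⟩,
            fun _ => by rw [hη]; exact S9.computable_getD _⟩,
           ⟨fun _ => hcy, fun _ => by rw [hη]; exact S9.computable_getD _⟩⟩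
  · have hinf := S9.infinitely_nongreen hc hRspec hcy
    have hnc : ¬ Computable (evalSeq (S9.Mach c) X) := fun hO =>
      S9.mlrandom_not_computable hX (S9.computable_of_output c X hinf hO)
    have hne : ¬ ∃ η : BStr, evalSeq (S9.Mach c) X = fun n => η.getD n false := by
      rintro ⟨η, hη⟩
      obtain ⟨s, hs, hg⟩ := hinf η.length
      have h1 := congrFun hη (2 * s)
      rw [S9.O_even, hg] at h1
      have h2 : η.getD (2 * s) false = false :=
        List.getD_eq_default _ _ (by omega)
      rw [h2] at h1
      simp at h1
    exact ⟨⟨fun h => absurd h hnc, fun h => absurd h hne⟩,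
           ⟨fun h => absurd h hnc, fun h => absurd h hcy⟩⟩
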